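/- non(𝒩) ≥ 𝔡₂: every non-null set X ⊆ 2^ω is R₂-dominating, i.e., for every g ∈ 2^ω there is x ∈ X with g↾I_n ≠ x↾I_n for all but finitely many n; consequently the uniformity of the null ideal is at least the R₂-domination number. -/

import Mathlib

open MeasureTheory Filter

/- The set of `x` agreeing with `g` on the block `Iₙ` has measure `2^-|Iₙ| ≤ 2^-n`, a summable
sequence, so by Borel–Cantelli the set of `x` agreeing with `g` on infinitely many blocks, which is
`{x | ¬ g R₂ x}`, is null. A non-null set cannot lie inside it. -/

def intervalStart (n : ℕ) : ℕ := 2 ^ (n + 1) - 2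

def agreesOnBlock (f g : ℕ → Bool) (n : ℕ) : Prop :=
  ∀ k ∈ Set.Ico (intervalStart n) (intervalStart n + 2 ^ (n + 1)), f k = g k

/-- The relation R₂: eventually, `g` and `x` differ on every interval `Iₙ`. -/
def R2 (g x : ℕ → Bool) : Prop :=
  ∀ᶠ n in Filter.atTop, ¬ agreesOnBlock g x n

def IsUniformOnCylinders (μ : Measure (ℕ → Bool)) : Prop :=
  ∀ (n : ℕ) (s : ℕ → Bool), μ {f : ℕ → Bool | ∀ i < n, f i = s i} = (1 / 2 : ENNReal) ^ n

namespace IsUniformOnCylinders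

variable {μ : Measure (ℕ → Bool)}

theorem measure_univ (hμ : IsUniformOnCylinders μ) : μ Set.univ = 1 := by
  simpa using hμ 0 fun _ => true

/-- Only the `2 ^ s` choices of `x` below `s` are free, each cylinder of length `s + L`
having measure `2 ^ -(s + L)`. -/
theorem measure_setOf_eqOn_Ico_le (hμ : IsUniformOnCylinders μ) (g : ℕ → Bool) (s L : ℕ) :
    μ {x | ∀ k ∈ Set.Ico s (s + L), g k = x k} ≤ (1 / 2 : ENNReal) ^ L := by
  let extend (t : Fin s → Bool) (i : ℕ) : Bool := if h : i < s then t ⟨i, h⟩ else g i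
  have hcover : {x : ℕ → Bool | ∀ k ∈ Set.Ico s (s + L), g k = x k} ⊆
      ⋃ t : Fin s → Bool, {x | ∀ i < s + L, x i = extend t i} := by
    intro x hx
    refine Set.mem_iUnion.2 ⟨fun i => x i, fun i hi => ?_⟩
    by_cases h : i < s
    · simp [extend, h]
    · simpa [extend, h] using (hx i ⟨not_lt.1 h, hi⟩).symm
  calc μ {x | ∀ k ∈ Set.Ico s (s + L), g k = x k}
      ≤ ∑ t : Fin s → Bool, μ {x | ∀ i < s + L, x i = extend t i} :=
        (measure_mono hcover).trans (measure_iUnion_fintype_le μ _)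
    _ = (2 : ENNReal) ^ s * (1 / 2 : ENNReal) ^ (s + L) := by
        simp [fun t => hμ (s + L) (extend t)]
    _ = (1 / 2 : ENNReal) ^ L := by
        rw [pow_add, ← mul_assoc, ← mul_pow, one_div,
          ENNReal.mul_inv_cancel two_ne_zero ENNReal.ofNat_ne_top, one_pow, one_mul]

theorem measure_setOf_agreesOnBlock_le (hμ : IsUniformOnCylinders μ) (g : ℕ → Bool) (n : ℕ) :
    μ {x | agreesOnBlock g x n} ≤ 2⁻¹ ^ n :=
  calc μ {x | agreesOnBlock g x n} ≤ (1 / 2 : ENNReal) ^ 2 ^ (n + 1) :=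
        hμ.measure_setOf_eqOn_Ico_le g _ _
    _ ≤ 2⁻¹ ^ n := by
        rw [one_div]
        exact pow_le_pow_of_le_one zero_le (ENNReal.inv_le_one.2 one_le_two)
          (Nat.lt_two_pow_self.le.trans (Nat.pow_le_pow_right two_pos n.le_succ))

theorem measure_setOf_not_R2_eq_zero (hμ : IsUniformOnCylinders μ) (g : ℕ → Bool) :
    μ {x | ¬ R2 g x} = 0 := by
  simp only [R2, not_eventually, not_not]
  refine measure_setOfPred_frequently_eq_zero (ne_top_of_le_ne_top ?_
    (ENNReal.tsum_le_tsum (hμ.measure_setOf_agreesOnBlock_le g)))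
  simp

theorem exists_R2_of_measure_ne_zero (hμ : IsUniformOnCylinders μ) {X : Set (ℕ → Bool)}
    (hX : μ X ≠ 0) (g : ℕ → Bool) : ∃ x ∈ X, R2 g x := by
  by_contra! h
  exact hX (measure_mono_null h (hμ.measure_setOf_not_R2_eq_zero g))

end IsUniformOnCylinders

theorem nonNull_ge_d2
    (μ : Measure (ℕ → Bool))
    (hcyl : ∀ (n : ℕ) (s : ℕ → Bool),
      μ {f : ℕ → Bool | ∀ i < n, f i = s i} = (1 / 2 : ENNReal) ^ n) :
    (∀ X : Set (ℕ → Bool), μ X ≠ 0 → ∀ g : ℕ → Bool, ∃ x ∈ X, R2 g x) ∧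
    sInf {c : Cardinal | ∃ X : Set (ℕ → Bool),
        Cardinal.mk X = c ∧ ∀ g : ℕ → Bool, ∃ x ∈ X, R2 g x}
      ≤ sInf {c : Cardinal | ∃ X : Set (ℕ → Bool),
        Cardinal.mk X = c ∧ μ X ≠ 0} := by
  have hμ : IsUniformOnCylinders μ := hcyl
  have dominating : ∀ X : Set (ℕ → Bool), μ X ≠ 0 → ∀ g, ∃ x ∈ X, R2 g x :=
    fun _ hX => hμ.exists_R2_of_measure_ne_zero hX
  refine ⟨dominating, csInf_le_csInf' ⟨_, Set.univ, rfl, by simp [hμ.measure_univ]⟩ ?_⟩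
  rintro _ ⟨X, rfl, hX⟩
  exact ⟨X, rfl, dominating X hX⟩
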